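/- Let 0 < r < c be real numbers. There exists t₀ ∈ (0,1) such that for all t ∈ (0, t₀) and all θ ∈ ℝ, there is no tuple (a, η₀, η₁, η₂, ζ) of complex numbers with 0 < |a| < 1, |ηⱼ| < 1 for each j, and |ζ| > 1 satisfying both the polynomial identity r(w − a) + c·w³·(1 − conj(a)·w) = −c·conj(a)·(w − ζ)(w − η₀)(w − η₁)(w − η₂) for all w ∈ ℂ, and the constraint a·r·((1−t)/t)² = e^{6iθ}·(η₀η₁η₂)³. -/

import Mathlib

/-!
Put `λ = (1 - t) / t`. Evaluating the factorization of `Ξ(w) = r(w - a) + c w³(1 - ā w)` at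
`w = 0` and taking norms gives `c |ζ| |η₀η₁η₂| = r`; with the norm of the constraint,
`|a| r λ² = |η₀η₁η₂|³`, this forces `c³ |ζ|³ |a| λ² = r²`, so `|a|` is of order `λ⁻²`.
On the other hand `Ξ(ζ) = 0` gives `c |ζ|³ ≤ r |ζ| + |a| (r + c |ζ|⁴)`, which together with
`|ζ| > 1` bounds `|a| λ²` from below; the two are incompatible once
`λ² > r² (r + c) / ((c - r) c³)`.
-/

open Complex ComplexConjugate

def xi (r c : ℝ) (a w : ℂ) : ℂ := r * (w - a) + c * w ^ 3 * (1 - conj a * w)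

lemma exists_lt_sq_one_sub_div (B : ℝ) :
    ∃ t₀ ∈ Set.Ioo (0 : ℝ) 1, ∀ t ∈ Set.Ioo (0 : ℝ) t₀, B < ((1 - t) / t) ^ 2 := by
  refine ⟨1 / (|B| + 2), ⟨by positivity, ?_⟩, fun t ⟨ht0, ht⟩ => ?_⟩
  · rw [div_lt_one (by positivity)]
    linarith [abs_nonneg B]
  · have hl : |B| + 1 < (1 - t) / t := by
      rw [lt_div_iff₀ ht0]
      rw [lt_div_iff₀ (by positivity)] at ht
      linarith
    nlinarith [le_abs_self B, abs_nonneg B]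

lemma norm_pow_three_le_of_xi_eq_zero {r c : ℝ} (hr : 0 ≤ r) (hc : 0 ≤ c) {a ζ : ℂ}
    (h : xi r c a ζ = 0) :
    c * ‖ζ‖ ^ 3 ≤ r * ‖ζ‖ + ‖a‖ * (r + c * ‖ζ‖ ^ 4) := by
  have hζ : (c : ℂ) * ζ ^ 3 = -(r * ζ) + (r * a + c * conj a * ζ ^ 4) := by
    unfold xi at h
    linear_combination h
  calc c * ‖ζ‖ ^ 3 = ‖(c : ℂ) * ζ ^ 3‖ := by simp [abs_of_nonneg hc]
    _ ≤ ‖(r : ℂ) * ζ‖ + (‖(r : ℂ) * a‖ + ‖(c : ℂ) * conj a * ζ ^ 4‖) := by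
      rw [hζ, ← norm_neg ((r : ℂ) * ζ)]
      exact (norm_add_le _ _).trans (add_le_add_right (norm_add_le _ _) _)
    _ = r * ‖ζ‖ + ‖a‖ * (r + c * ‖ζ‖ ^ 4) := by
      simp [abs_of_nonneg hr, abs_of_nonneg hc]
      ring

lemma norm_mul_norm_prod_eq_of_factorization {r c : ℝ} (hr : 0 ≤ r) (hc : 0 ≤ c)
    {a ζ η₀ η₁ η₂ : ℂ} (ha : a ≠ 0)
    (h : ∀ w, xi r c a w = -c * conj a * (w - ζ) * (w - η₀) * (w - η₁) * (w - η₂)) :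
    c * ‖ζ‖ * (‖η₀‖ * ‖η₁‖ * ‖η₂‖) = r := by
  have h0 : (r : ℂ) * a = c * conj a * ζ * (η₀ * η₁ * η₂) := by
    have := h 0
    unfold xi at this
    linear_combination -this
  have := congrArg norm h0
  simp only [norm_mul, Complex.norm_conj, Complex.norm_real, Real.norm_eq_abs,
    abs_of_nonneg hr, abs_of_nonneg hc] at this
  exact mul_right_cancel₀ (norm_ne_zero_iff.2 ha) (by linear_combination -this)

lemma sq_lt_of_norm_bounds {r c A Z P l : ℝ} (hr : 0 < r) (hrc : r < c) (hZ : 1 < Z)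
    (hroot : c * Z ^ 3 ≤ r * Z + A * (r + c * Z ^ 4)) (hP : c * Z * P = r)
    (hcon : A * r * l ^ 2 = P ^ 3) :
    (c - r) * c ^ 3 * l ^ 2 < r ^ 2 * (r + c) := by
  have hZ4 : 1 < Z ^ 4 := one_lt_pow₀ hZ (by norm_num)
  have hc : 0 < c := hr.trans hrc
  have hA : c ^ 3 * Z ^ 3 * A * l ^ 2 = r ^ 2 := by
    refine mul_right_cancel₀ hr.ne' ?_
    linear_combination c ^ 3 * Z ^ 3 * hcon + (c ^ 2 * Z ^ 2 * P ^ 2 + c * Z * P * r + r ^ 2) * hP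
  refine lt_of_mul_lt_mul_left ?_ (by positivity : 0 ≤ Z ^ 4)
  calc Z ^ 4 * ((c - r) * c ^ 3 * l ^ 2) ≤ Z ^ 4 * ((c * Z ^ 2 - r) * c ^ 3 * l ^ 2) := by
        gcongr
        nlinarith
    _ = (c * Z ^ 3 - r * Z) * (c ^ 3 * l ^ 2 * Z ^ 3) := by ring
    _ ≤ A * (r + c * Z ^ 4) * (c ^ 3 * l ^ 2 * Z ^ 3) := by gcongr; linarith
    _ = r ^ 2 * (r + c * Z ^ 4) := by linear_combination (r + c * Z ^ 4) * hA
    _ < Z ^ 4 * (r ^ 2 * (r + c)) := by nlinarith [pow_pos hr 3]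

/-- Nonexistence part of Theorem `3fam`: for `t` small, equation (cond2) with
`I = {0,1,2}` (the class `H − 2β − α`) has no solutions. -/
theorem stmt_8 (r c : ℝ) (hr : 0 < r) (hrc : r < c) :
    ∃ t₀ ∈ Set.Ioo (0 : ℝ) 1, ∀ t ∈ Set.Ioo (0 : ℝ) t₀, ∀ θ : ℝ,
      ¬ ∃ a η₀ η₁ η₂ ζ : ℂ,
        0 < ‖a‖ ∧ ‖a‖ < 1 ∧
        ‖η₀‖ < 1 ∧ ‖η₁‖ < 1 ∧ ‖η₂‖ < 1 ∧
        1 < ‖ζ‖ ∧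
        (∀ w : ℂ,
          r * (w - a) + c * w ^ 3 * (1 - (starRingEnd ℂ) a * w) =
            -c * (starRingEnd ℂ) a * (w - ζ) * (w - η₀) * (w - η₁) * (w - η₂)) ∧
        a * r * (((1 - t : ℝ) / t : ℝ) : ℂ) ^ 2 =
          Complex.exp (6 * θ * Complex.I) * (η₀ * η₁ * η₂) ^ 3 := by
  have hc : 0 < c := hr.trans hrc
  obtain ⟨t₀, ht₀, hl⟩ := exists_lt_sq_one_sub_div (r ^ 2 * (r + c) / ((c - r) * c ^ 3))
  refine ⟨t₀, ht₀, ?_⟩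
  rintro t ht θ ⟨a, η₀, η₁, η₂, ζ, ha, -, -, -, -, hζ, hxi, hcon⟩
  have hB := hl t ht
  set l := (1 - t) / t
  have hl0 : 0 < l := div_pos (by linarith [ht.2, ht₀.2]) ht.1
  have hP := norm_mul_norm_prod_eq_of_factorization hr.le hc.le (norm_pos_iff.1 ha) hxi
  have hcon' : ‖a‖ * r * l ^ 2 = (‖η₀‖ * ‖η₁‖ * ‖η₂‖) ^ 3 := by
    simpa [Complex.norm_exp, abs_of_pos hr, abs_of_pos hl0] using congrArg norm hcon
  have hroot := norm_pow_three_le_of_xi_eq_zero hr.le hc.le (by simpa [xi] using hxi ζ)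
  rw [div_lt_iff₀ (by have := sub_pos.2 hrc; positivity)] at hB
  linarith [sq_lt_of_norm_bounds hr hrc hζ hroot hP hcon']
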